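/- arXiv:1307.0992 — 6 statements merged into one kernel-verified Lean document; each statement's English description precedes it below -/
import Mathlib

section
/- If a graph G contains, for every natural number k, a family of k pairwise edge-disjoint paths from a vertex v to a vertex w, then G contains an infinite family of pairwise edge-disjoint v–w paths. -/
open SimpleGraph

variable {V : Type*}

/-- A ray in `G`: an injective sequence of vertices with consecutive vertices adjacent. -/
def IsRay (G : SimpleGraph V) (f : ℕ → V) : Prop :=
  Function.Injective f ∧ ∀ n, G.Adj (f n) (f (n + 1))

/-- A double ray in `G`: an injective two-way infinite sequence with consecutive
vertices adjacent. -/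
def IsDoubleRay (G : SimpleGraph V) (f : ℤ → V) : Prop :=
  Function.Injective f ∧ ∀ n, G.Adj (f n) (f (n + 1))

/-- The edges used by a ray. -/
def rayEdges (f : ℕ → V) : Set (Sym2 V) := {e | ∃ n, e = s(f n, f (n + 1))}

/-- The edges used by a double ray. -/
def drEdges (f : ℤ → V) : Set (Sym2 V) := {e | ∃ n : ℤ, e = s(f n, f (n + 1))}

/-- Two rays are equivalent (belong to the same end) iff no finite vertex set
separates them: for every finite `S` there are tails of both rays avoiding `S`
which are joined by a walk avoiding `S`. -/
def RayEquiv (G : SimpleGraph V) (f g : ℕ → V) : Prop :=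
  ∀ S : Finset V, ∃ a b, (∀ i, a ≤ i → f i ∉ S) ∧ (∀ j, b ≤ j → g j ∉ S) ∧
    ∃ w : G.Walk (f a) (g b), ∀ v ∈ w.support, v ∉ S

/-- The forward ray of a double ray. -/
def drFwd (f : ℤ → V) : ℕ → V := fun n => f n

/-- The backward ray of a double ray. -/
def drBwd (f : ℤ → V) : ℕ → V := fun n => f (-(n : ℤ) - 1)

/-- The end (represented by the ray `R`) has vertex-degree exactly `k`:
there are `k` pairwise vertex-disjoint rays equivalent to `R`, but not `k + 1`. -/
def EndVertexDegree (G : SimpleGraph V) (R : ℕ → V) (k : ℕ) : Prop :=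
  (∃ F : Fin k → ℕ → V, (∀ i, IsRay G (F i) ∧ RayEquiv G R (F i)) ∧
      Pairwise fun i j => Disjoint (Set.range (F i)) (Set.range (F j))) ∧
  ¬ ∃ F : Fin (k + 1) → ℕ → V, (∀ i, IsRay G (F i) ∧ RayEquiv G R (F i)) ∧
      Pairwise fun i j => Disjoint (Set.range (F i)) (Set.range (F j))

/-!
Greedy construction. Fix any path `Q`. Among `k + |E(Q)|` pairwise edge-disjoint paths at most
`|E(Q)|` meet an edge of `Q`, so there are still arbitrarily many pairwise edge-disjoint paths
avoiding `Q`. Repeating this, with the finitely many edges chosen so far in place of `E(Q)`,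
yields the paths one at a time.
-/

open Finset Function

section Greedy

variable {ι κ β : Type*}

theorem Finset.card_filter_not_disjoint_le [Fintype κ] [DecidableEq β] {g : κ → Finset β}
    (hg : Pairwise (Disjoint on g)) (s : Finset β) :
    #{i | ¬Disjoint (g i) s} ≤ #s := by
  calc #{i | ¬Disjoint (g i) s}
      ≤ #(({i | ¬Disjoint (g i) s} : Finset κ).biUnion fun i => g i ∩ s) :=
        card_le_card_biUnion (fun i _ j _ hij => (hg hij).mono inter_subset_left inter_subset_left)
          (fun i hi => not_disjoint_iff_nonempty_inter.mp (mem_filter.mp hi).2)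
    _ ≤ #s := card_le_card (biUnion_subset.mpr fun _ _ => inter_subset_right)

theorem exists_embedding_disjoint_of_pairwise_disjoint [Fintype κ] {g : κ → Finset β}
    (hg : Pairwise (Disjoint on g)) (s : Finset β) {k : ℕ} (hk : k + #s ≤ Fintype.card κ) :
    ∃ e : Fin k ↪ κ, ∀ i, Disjoint (g (e i)) s := by
  classical
  have hA : k ≤ #({i | Disjoint (g i) s} : Finset κ) := by
    have := card_filter_not_disjoint_le hg s
    have := card_filter_add_card_filter_not (s := univ) fun i => Disjoint (g i) s
    rw [card_univ] at this
    omega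
  set A : Finset κ := {i | Disjoint (g i) s}
  exact ⟨(Fin.castLEEmb hA).trans (A.equivFin.symm.toEmbedding.trans (Embedding.subtype _)),
    fun i => (mem_filter.mp (A.equivFin.symm (Fin.castLE hA i)).2).2⟩

def ArbitrarilyManyDisjoint (f : ι → Finset β) (s : Finset β) : Prop :=
  ∀ k : ℕ, ∃ P : Fin k → ι, Pairwise (Disjoint on (f ∘ P)) ∧ ∀ i, Disjoint (f (P i)) s

theorem ArbitrarilyManyDisjoint.exists_extend [DecidableEq β] {f : ι → Finset β} {s : Finset β}
    (h : ArbitrarilyManyDisjoint f s) :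
    ∃ i, Disjoint (f i) s ∧ ArbitrarilyManyDisjoint f (s ∪ f i) := by
  obtain ⟨P₁, -, hP₁s⟩ := h 1
  refine ⟨P₁ 0, hP₁s 0, fun k => ?_⟩
  obtain ⟨P, hP, hPs⟩ := h (k + #(f (P₁ 0)))
  obtain ⟨e, he⟩ :=
    exists_embedding_disjoint_of_pairwise_disjoint hP (f (P₁ 0)) (Fintype.card_fin _).ge
  exact ⟨P ∘ e, fun i j hij => hP (e.injective.ne hij),
    fun i => disjoint_union_right.mpr ⟨hPs (e i), he i⟩⟩

theorem exists_seq_pairwise_disjoint_of_forall_fin {f : ι → Finset β}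
    (h : ∀ k : ℕ, ∃ P : Fin k → ι, Pairwise (Disjoint on (f ∘ P))) :
    ∃ P : ℕ → ι, Pairwise (Disjoint on (f ∘ P)) := by
  classical
  choose next hnext_disj hnext using fun s : {s // ArbitrarilyManyDisjoint f s} => s.2.exists_extend
  let extend : {s // ArbitrarilyManyDisjoint f s} → {s // ArbitrarilyManyDisjoint f s} :=
    fun s => ⟨s.1 ∪ f (next s), hnext s⟩
  have h₀ : ArbitrarilyManyDisjoint f ∅ := fun k =>
    (h k).imp fun _ hP => ⟨hP, fun _ => disjoint_empty_right _⟩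
  let used : ℕ → {s // ArbitrarilyManyDisjoint f s} := fun n => extend^[n] ⟨∅, h₀⟩
  have hused_succ : ∀ n, (used (n + 1)).1 = (used n).1 ∪ f (next (used n)) := fun n =>
    congrArg Subtype.val (iterate_succ_apply' extend n _)
  have hmono : Monotone fun n => (used n).1 :=
    monotone_nat_of_le_succ fun n => (hused_succ n).symm ▸ subset_union_left
  refine ⟨fun n => next (used n), (pairwise_disjoint_on _).mpr fun m n hmn => ?_⟩
  have hm_used : f (next (used m)) ⊆ (used n).1 :=
    (hused_succ m ▸ subset_union_right).trans (hmono (Nat.succ_le_of_lt hmn))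
  exact ((hnext_disj (used n)).mono_right hm_used).symm

end Greedy

/-- Arbitrarily many pairwise edge-disjoint `v`–`w` paths give infinitely many. -/
theorem stmt_2 (G : SimpleGraph V) (v w : V)
    (h : ∀ k : ℕ, ∃ P : Fin k → G.Walk v w, (∀ i, (P i).IsPath) ∧
      Pairwise fun i j => List.Disjoint (P i).edges (P j).edges) :
    ∃ P : ℕ → G.Walk v w, (∀ i, (P i).IsPath) ∧
      Pairwise fun i j => List.Disjoint (P i).edges (P j).edges := by
  classical
  let edgeSet : {p : G.Walk v w // p.IsPath} → Finset (Sym2 V) := fun p => p.1.edges.toFinset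
  obtain ⟨P, hP⟩ := exists_seq_pairwise_disjoint_of_forall_fin (f := edgeSet) fun k => by
    obtain ⟨P, hpath, hdisj⟩ := h k
    exact ⟨fun i => ⟨P i, hpath i⟩, fun i j hij =>
      List.disjoint_toFinset_iff_disjoint.mpr (hdisj hij)⟩
  exact ⟨fun n => (P n).1, fun n => (P n).2, fun i j hij =>
    List.disjoint_toFinset_iff_disjoint.mp (hP hij)⟩
end

section
/- Every tree with infinitely many ends contains an infinite family of pairwise edge-disjoint double rays. -/
open SimpleGraph

variable {V : Type*}

/-!
Reroot all the given rays at one vertex `v`. In a tree, two rays from `v` agree up to the first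
index where they differ and never meet again afterwards. Non-equivalent rays are therefore
distinct, and the first-difference index `firstDiff` of rays satisfies the ultrametric inequality
`min (firstDiff a b) (firstDiff b c) ≤ firstDiff a c`. A Ramsey-type extraction then yields rays
`r 0, r 1, …` from `v` such that `r i` and `r j` first differ at `t i` whenever `i < j`, with `t`
monotone. Turning from `r (2n)` into `r (2n+1)` at index `t (2n) - 1` gives a double ray whose
edges all lie at indices `≥ t (2n) - 1`, while every ray of an earlier pair has already left
`r (2n)` and `r (2n+1)` by index `t (2n)`; so these double rays are pairwise edge-disjoint.
-/

open PiNat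

lemma IsRay.tail {G : SimpleGraph V} {f : ℕ → V} (hf : IsRay G f) (m : ℕ) :
    IsRay G fun k => f (m + k) :=
  ⟨fun _ _ h => Nat.add_left_cancel (hf.1 h), fun k => hf.2 (m + k)⟩

def glueRays (a b : ℕ → V) (C : ℕ) : ℤ → V
  | .ofNat k => b (C + k)
  | .negSucc k => a (C + k + 1)

lemma mem_drEdges_glueRays {a b : ℕ → V} {C : ℕ} (hC : a C = b C) {e : Sym2 V}
    (he : e ∈ drEdges (glueRays a b C)) :
    ∃ p, C ≤ p ∧ (e = s(a p, a (p + 1)) ∨ e = s(b p, b (p + 1))) := by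
  obtain ⟨z, rfl⟩ := he
  rcases z with k | _ | k
  · exact ⟨C + k, by omega, .inr rfl⟩
  · refine ⟨C, le_rfl, .inl ?_⟩
    change s(a (C + 1), b C) = _
    rw [← hC]
    exact Sym2.eq_swap
  · exact ⟨C + k + 1, by omega, .inl Sym2.eq_swap⟩

section UltrametricExtraction

variable {ι : Type*} {c : ι → ι → ℕ}

lemma Set.Infinite.exists_mem_infinite_subset_apply_eq (hsymm : ∀ i j, c i j = c j i)
    (hultra : ∀ i j k, i ≠ j → j ≠ k → i ≠ k → min (c i j) (c j k) ≤ c i k)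
    {S : Set ι} (hS : S.Infinite) :
    ∃ y ∈ S, ∃ T ⊆ S, T.Infinite ∧ y ∉ T ∧ ∃ u, ∀ z ∈ T, c y z = u := by
  obtain ⟨x, hx⟩ := hS.nonempty
  have hS' : (S \ {x}).Infinite := hS.sdiff (Set.finite_singleton x)
  by_cases hfib : ∃ u, {z ∈ S \ {x} | c x z = u}.Infinite
  · obtain ⟨u, hu⟩ := hfib
    exact ⟨x, hx, _, fun z hz => hz.1.1, hu, fun hx' => hx'.1.2 rfl, u, fun z hz => hz.2⟩
  simp only [not_exists, Set.not_infinite] at hfib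
  obtain ⟨y, hyS, hyx⟩ := hS'.nonempty
  have hyx : x ≠ y := fun h => hyx h.symm
  have hlow : {z ∈ S \ {x} | c x z ≤ c x y}.Finite := by
    refine ((Set.finite_Iic (c x y)).biUnion fun u _ => hfib u).subset fun z hz => ?_
    exact Set.mem_biUnion (Set.mem_Iic.2 hz.2) ⟨hz.1, rfl⟩
  -- beyond `c x y`, the ultrametric inequality pins `c y z` to `c x y`
  refine ⟨y, hyS, {z ∈ S \ {x} | c x y < c x z}, fun z hz => hz.1.1, ?_,
    fun hy => lt_irrefl _ hy.2, c x y, fun z ⟨⟨_, hzx⟩, hz⟩ => ?_⟩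
  · refine (hS'.sdiff hlow).mono fun z hz => ⟨hz.1, ?_⟩
    exact lt_of_not_ge fun h => hz.2 ⟨hz.1, h⟩
  · have hzx : x ≠ z := fun h => hzx h.symm
    have hyz : y ≠ z := by rintro rfl; exact lt_irrefl _ hz
    have h1 := hultra y x z hyx.symm hzx hyz
    have h2 := hultra x z y hzx hyz.symm hyx
    rw [hsymm y x] at h1
    rw [hsymm z y] at h2
    omega

theorem exists_injective_monotone_of_min_le [Infinite ι] (hsymm : ∀ i j, c i j = c j i)
    (hultra : ∀ i j k, i ≠ j → j ≠ k → i ≠ k → min (c i j) (c j k) ≤ c i k) :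
    ∃ x : ℕ → ι, Function.Injective x ∧ ∃ t : ℕ → ℕ, Monotone t ∧
      ∀ i j, i < j → c (x i) (x j) = t i := by
  choose y hyS T hTS hT hyT u hu using fun S : {S : Set ι // S.Infinite} =>
    S.2.exists_mem_infinite_subset_apply_eq hsymm hultra
  let S : ℕ → {S : Set ι // S.Infinite} :=
    fun n => (fun S => ⟨T S, hT S⟩)^[n] ⟨Set.univ, Set.infinite_univ⟩
  have hS_succ : ∀ n, (S (n + 1)).1 = T (S n) := fun n => by
    simp only [S, Function.iterate_succ_apply']
  have hS_anti : Antitone fun n => (S n).1 :=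
    antitone_nat_of_succ_le fun n => (hS_succ n).symm ▸ hTS (S n)
  have hmem : ∀ i j, i < j → y (S j) ∈ T (S i) := fun i j hij =>
    hS_succ i ▸ hS_anti (Nat.succ_le_of_lt hij) (hyS (S j))
  have hne : ∀ i j, i < j → y (S i) ≠ y (S j) := fun i j hij h =>
    hyT (S i) (h ▸ hmem i j hij)
  have hc : ∀ i j, i < j → c (y (S i)) (y (S j)) = u (S i) := fun i j hij =>
    hu _ _ (hmem i j hij)
  refine ⟨fun n => y (S n), fun i j h => ?_, fun n => u (S n),
    monotone_nat_of_le_succ fun n => ?_, hc⟩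
  · by_contra hij
    rcases lt_or_gt_of_ne hij with hij | hij
    · exact hne i j hij h
    · exact hne j i hij h.symm
  · have := hultra _ _ _ (hne n (n + 1) (by omega)).symm (hne n (n + 2) (by omega))
      (hne (n + 1) (n + 2) (by omega))
    rwa [hsymm, hc n (n + 1) (by omega), hc n (n + 2) (by omega), hc (n + 1) (n + 2) (by omega),
      min_self] at this

end UltrametricExtraction

namespace SimpleGraph

variable {G : SimpleGraph V}

def seqWalk (f : ℕ → V) (hf : ∀ n, G.Adj (f n) (f (n + 1))) : (n : ℕ) → G.Walk (f 0) (f n)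
  | 0 => Walk.nil
  | n + 1 => (seqWalk f hf n).concat (hf n)

lemma length_seqWalk (f : ℕ → V) (hf : ∀ n, G.Adj (f n) (f (n + 1))) (n : ℕ) :
    (seqWalk f hf n).length = n := by
  induction n with
  | zero => rfl
  | succ n ih => simp [seqWalk, ih]

lemma support_seqWalk (f : ℕ → V) (hf : ∀ n, G.Adj (f n) (f (n + 1))) (n : ℕ) :
    (seqWalk f hf n).support = (List.range (n + 1)).map f := by
  induction n with
  | zero => rfl
  | succ n ih => simp [seqWalk, ih, List.range_succ (n := n + 1)]

lemma isPath_seqWalk {f : ℕ → V} (hf : IsRay G f) (n : ℕ) : (seqWalk f hf.2 n).IsPath := by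
  rw [Walk.isPath_def, support_seqWalk]
  exact List.nodup_range.map hf.1

theorem IsTree.eq_of_isRay_apply_eq (hT : G.IsTree) {f g : ℕ → V} (hf : IsRay G f)
    (hg : IsRay G g) (h0 : f 0 = g 0) {p q : ℕ} (h : f p = g q) :
    p = q ∧ ∀ k ≤ p, f k = g k := by
  have hW : seqWalk f hf.2 p = (seqWalk g hg.2 q).copy h0.symm h.symm :=
    (hT.existsUnique_path _ _).unique (isPath_seqWalk hf p)
      ((Walk.isPath_copy _ _ _).2 (isPath_seqWalk hg q))
  have hpq : p = q := by
    simpa only [length_seqWalk, Walk.length_copy] using congrArg Walk.length hW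
  subst hpq
  have hsupp := congrArg Walk.support hW
  rw [Walk.support_copy, support_seqWalk, support_seqWalk, List.map_inj_left] at hsupp
  exact ⟨rfl, fun k hk => hsupp k (List.mem_range.2 (Nat.lt_succ_of_le hk))⟩

theorem IsTree.eq_of_isRay_edge_eq (hT : G.IsTree) {f g : ℕ → V} (hf : IsRay G f)
    (hg : IsRay G g) (h0 : f 0 = g 0) {p q : ℕ} (h : s(f p, f (p + 1)) = s(g q, g (q + 1))) :
    p = q ∧ ∀ k ≤ p + 1, f k = g k := by
  rcases Sym2.eq_iff.1 h with ⟨-, h1⟩ | ⟨h1, h2⟩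
  · obtain ⟨hpq, hfg⟩ := hT.eq_of_isRay_apply_eq hf hg h0 h1
    exact ⟨by omega, hfg⟩
  · have := (hT.eq_of_isRay_apply_eq hf hg h0 h1).1
    have := (hT.eq_of_isRay_apply_eq hf hg h0 h2).1
    omega

-- The junction vertex is taken from `P` and `f 0` is skipped, so this is a ray only if `f 0 = w`.
def Walk.thenSeq {u w : V} (P : G.Walk u w) (f : ℕ → V) (n : ℕ) : V :=
  if n ≤ P.length then P.getVert n else f (n - P.length)

lemma Walk.thenSeq_zero {u w : V} (P : G.Walk u w) (f : ℕ → V) : P.thenSeq f 0 = u := by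
  simp [thenSeq]

lemma Walk.thenSeq_length_add {u w : V} (P : G.Walk u w) {f : ℕ → V} (hf0 : f 0 = w) (k : ℕ) :
    P.thenSeq f (P.length + k) = f k := by
  rcases Nat.eq_zero_or_pos k with rfl | hk
  · simp [thenSeq, hf0]
  · simp [thenSeq, show ¬ P.length + k ≤ P.length by omega]

lemma Walk.IsPath.isRay_thenSeq {u w : V} {P : G.Walk u w} (hP : P.IsPath) {f : ℕ → V}
    (hf : IsRay G f) (hf0 : f 0 = w) (hPf : ∀ n, f n ∈ P.support → n = 0) :
    IsRay G (P.thenSeq f) := by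
  have hlow : ∀ n ≤ P.length, P.thenSeq f n = P.getVert n := fun n hn => if_pos hn
  have hhigh : ∀ n, P.length ≤ n → P.thenSeq f n = f (n - P.length) := fun n hn => by
    obtain ⟨k, rfl⟩ := Nat.exists_eq_add_of_le hn
    rw [P.thenSeq_length_add hf0, Nat.add_sub_cancel_left]
  have hmix : ∀ n n', n ≤ P.length → P.length < n' → P.getVert n ≠ f (n' - P.length) :=
    fun n n' hn hn' h => by
      have := hPf _ (h ▸ Walk.mem_support_iff_exists_getVert.2 ⟨n, rfl, hn⟩)
      omega
  refine ⟨fun n n' h => ?_, fun n => ?_⟩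
  · rcases le_or_gt n P.length with hn | hn <;> rcases le_or_gt n' P.length with hn' | hn'
    · exact hP.getVert_injOn hn hn' (by rwa [hlow n hn, hlow n' hn'] at h)
    · exact absurd (by rwa [hlow n hn, hhigh n' hn'.le] at h) (hmix n n' hn hn')
    · exact absurd (by rwa [hlow n' hn', hhigh n hn.le, eq_comm] at h) (hmix n' n hn' hn)
    · rw [hhigh n hn.le, hhigh n' hn'.le] at h
      have := hf.1 h
      omega
  · rcases lt_or_ge n P.length with hn | hn
    · rw [hlow n hn.le, hlow (n + 1) hn]
      exact P.adj_getVert_succ hn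
    · rw [hhigh n hn, hhigh (n + 1) (by omega), Nat.sub_add_comm hn]
      exact hf.2 _

theorem Connected.exists_isRay_tail_eq (hG : G.Connected) (v : V) {f : ℕ → V}
    (hf : IsRay G f) : ∃ g, IsRay G g ∧ g 0 = v ∧ ∃ l m, ∀ k, g (l + k) = f (m + k) := by
  classical
  obtain ⟨P, hP⟩ := ((hG.preconnected v (f 0)).some).toPath
  obtain ⟨M, hM, hMmax⟩ := Set.exists_max_image {n | f n ∈ P.support} id
    ((List.finite_toSet P.support).preimage hf.1.injOn) ⟨0, P.end_mem_support⟩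
  refine ⟨(P.takeUntil (f M) hM).thenSeq fun k => f (M + k), ?_, Walk.thenSeq_zero _ _,
    _, M, Walk.thenSeq_length_add _ rfl⟩
  refine (hP.takeUntil hM).isRay_thenSeq (hf.tail M) rfl fun n hn => ?_
  have := hMmax _ (P.support_takeUntil_subset_support hM hn)
  simp only [id] at this
  omega

lemma exists_walk_support_subset_range {f : ℕ → V} (hf : ∀ n, G.Adj (f n) (f (n + 1)))
    (a b : ℕ) : ∃ w : G.Walk (f a) (f b), ∀ u ∈ w.support, u ∈ Set.range f := by
  refine ⟨(seqWalk f hf a).reverse.append (seqWalk f hf b), fun u hu => ?_⟩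
  rw [Walk.mem_support_append_iff, Walk.support_reverse, List.mem_reverse, support_seqWalk,
    support_seqWalk] at hu
  rcases hu with hu | hu <;> exact (List.mem_map.1 hu).imp fun _ h => h.2

theorem rayEquiv_of_tail_eq {f f' g : ℕ → V} (hg : IsRay G g) {l m l' m' : ℕ}
    (h : ∀ k, g (l + k) = f (m + k)) (h' : ∀ k, g (l' + k) = f' (m' + k)) :
    RayEquiv G f f' := by
  intro S
  obtain ⟨K, hK⟩ := ((S.finite_toSet).preimage hg.1.injOn).bddAbove
  have hgS : ∀ k, K < k → g k ∉ S := fun k hk hS => absurd (hK hS) (by omega)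
  have hfS : ∀ {f₀ : ℕ → V} {l₀ m₀ : ℕ}, (∀ k, g (l₀ + k) = f₀ (m₀ + k)) →
      ∀ i, m₀ + K < i → f₀ i ∉ S := fun {f₀ l₀ m₀} h₀ i hi => by
    obtain ⟨k, rfl⟩ := Nat.exists_eq_add_of_lt hi
    rw [show m₀ + K + k + 1 = m₀ + (K + k + 1) by omega, ← h₀]
    exact hgS _ (by omega)
  obtain ⟨w, hw⟩ := exists_walk_support_subset_range (hg.tail (K + 1)).2 l l'
  refine ⟨m + (K + 1), m' + (K + 1), fun i hi => hfS h i (by omega),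
    fun j hj => hfS h' j (by omega), w.copy ?_ ?_, fun u hu => ?_⟩
  · rw [← h, Nat.add_comm]
  · rw [← h', Nat.add_comm]
  · rw [Walk.support_copy] at hu
    obtain ⟨k, rfl⟩ := hw u hu
    exact hgS _ (by omega)

theorem IsTree.isDoubleRay_glueRays (hT : G.IsTree) {a b : ℕ → V} (ha : IsRay G a)
    (hb : IsRay G b) (h0 : a 0 = b 0) {C : ℕ} (hC : a C = b C) (hC1 : a (C + 1) ≠ b (C + 1)) :
    IsDoubleRay G (glueRays a b C) := by
  have hab : ∀ p q, a (C + p + 1) ≠ b (C + q) := fun p q h =>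
    hC1 ((hT.eq_of_isRay_apply_eq ha hb h0 h).2 (C + 1) (by omega))
  refine ⟨fun z z' h => ?_, fun z => ?_⟩
  · rcases z with k | k <;> rcases z' with k' | k' <;> simp only [glueRays] at h
    · have := hb.1 h; congr; omega
    · exact absurd h.symm (hab _ _)
    · exact absurd h (hab _ _)
    · have := ha.1 h; congr; omega
  · rcases z with k | _ | k
    · exact hb.2 (C + k)
    · change G.Adj (a (C + 1)) (b C)
      rw [← hC]
      exact (ha.2 C).symm
    · exact (ha.2 (C + k + 1)).symm

theorem IsTree.exists_edgeDisjoint_doubleRays (hT : G.IsTree) {r : ℕ → ℕ → V}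
    (hr : ∀ i, IsRay G (r i)) (hr0 : ∀ i j, r i 0 = r j 0)
    (hne : Pairwise fun i j => r i ≠ r j) {t : ℕ → ℕ} (ht : Monotone t) (hrt : ∀ i j, i < j → firstDiff (r i) (r j) = t i) :
    ∃ F : ℕ → ℤ → V, (∀ i, IsDoubleRay G (F i)) ∧
      Pairwise fun i j => Disjoint (drEdges (F i)) (drEdges (F j)) := by
  have hne' : ∀ n, r (2 * n) ≠ r (2 * n + 1) := fun n => hne (by omega)
  have hpos : ∀ n, 0 < t (2 * n) := fun n => Nat.pos_of_ne_zero fun h => by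
    have := apply_firstDiff_ne (hne' n)
    rw [hrt (2 * n) (2 * n + 1) (by omega), h] at this
    exact this (hr0 _ _)
  have hturn : ∀ n, r (2 * n) (t (2 * n) - 1) = r (2 * n + 1) (t (2 * n) - 1) := fun n =>
    apply_eq_of_lt_firstDiff (by rw [hrt (2 * n) (2 * n + 1) (by omega)]; have := hpos n; omega)
  have hedge_ne : ∀ i j, i < j → ∀ p q, t i ≤ q + 1 →
      s(r i p, r i (p + 1)) ≠ s(r j q, r j (q + 1)) := fun i j hij p q hq h => by
      obtain ⟨rfl, hagree⟩ := hT.eq_of_isRay_edge_eq (hr i) (hr j) (hr0 i j) h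
      exact apply_firstDiff_ne (hne hij.ne) (hagree _ (by rw [hrt i j hij]; exact hq))
  have hedges : ∀ n e, e ∈ drEdges (glueRays (r (2 * n)) (r (2 * n + 1)) (t (2 * n) - 1)) →
      ∃ i p, i / 2 = n ∧ t (2 * n) - 1 ≤ p ∧ e = s(r i p, r i (p + 1)) := fun n e he => by
    obtain ⟨p, hp, he | he⟩ := mem_drEdges_glueRays (hturn n) he
    exacts [⟨2 * n, p, by omega, hp, he⟩, ⟨2 * n + 1, p, by omega, hp, he⟩]
  refine ⟨fun n => glueRays (r (2 * n)) (r (2 * n + 1)) (t (2 * n) - 1), fun n => ?_,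
    (pairwise_disjoint_on _).2 fun m n hmn => Set.disjoint_left.2 fun e hem hen => ?_⟩
  · refine hT.isDoubleRay_glueRays (hr _) (hr _) (hr0 _ _) (hturn n) ?_
    rw [Nat.sub_add_cancel (hpos n), ← hrt (2 * n) (2 * n + 1) (by omega)]
    exact apply_firstDiff_ne (hne' n)
  · obtain ⟨i, p, hi, -, rfl⟩ := hedges m e hem
    obtain ⟨j, q, hj, hq, he⟩ := hedges n _ hen
    exact hedge_ne i j (by omega) p q (by have := ht (show i ≤ 2 * n by omega); omega) he

end SimpleGraph

/-- Every tree with infinitely many ends contains infinitely many pairwise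
edge-disjoint double rays. -/
theorem stmt_3 (G : SimpleGraph V) (hT : G.IsTree)
    (h : ∃ F : ℕ → ℕ → V, (∀ i, IsRay G (F i)) ∧
      Pairwise fun i j => ¬ RayEquiv G (F i) (F j)) :
    ∃ F : ℕ → ℤ → V, (∀ i, IsDoubleRay G (F i)) ∧
      Pairwise fun i j => Disjoint (drEdges (F i)) (drEdges (F j)) := by
  obtain ⟨F, hF, hFequiv⟩ := h
  choose g hg hg0 l m hgF using fun i => hT.connected.exists_isRay_tail_eq (F 0 0) (hF i)
  have hgne : Pairwise fun i j => g i ≠ g j := fun i j hij hgij =>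
    hFequiv hij (rayEquiv_of_tail_eq (hg i) (hgF i) (hgij ▸ hgF j))
  obtain ⟨x, hx, t, ht, hxt⟩ := exists_injective_monotone_of_min_le
    (c := fun i j => firstDiff (g i) (g j)) (fun i j => firstDiff_comm _ _)
    (fun i j k _ _ hik => min_firstDiff_le _ _ _ (hgne hik))
  exact hT.exists_edgeDisjoint_doubleRays (fun i => hg (x i))
    (fun i j => (hg0 (x i)).trans (hg0 (x j)).symm) (fun i j hij => hgne (hx.ne hij)) ht hxt
end

section
/- Every tree T with at least three ends contains a double ray D such that some connected component of the graph obtained from T by deleting the edges of D has infinitely many ends, provided T has infinitely many ends. -/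
open SimpleGraph

variable {V : Type*}

/-!
Re-root the given rays at one vertex: in a connected graph every ray shares a tail with a ray
from any prescribed vertex, and shared tails do not change ends. The rays become pairwise
distinct branches of the tree rooted there, and the height at which two branches separate is an
ultrametric on their indices. A Ramsey-type argument on this ultrametric yields branches `a`, `b`
and infinitely many branches `σ n` that all leave `b` at one height `t` and leave `a` where `b`
does. Since in a tree separated branches never meet again, the double ray `D` formed by `a` and
`b` avoids every `σ n` above height `t`; the tails of the `σ n` from height `t` on are therefore
rays of `T - E(D)` starting at the same vertex of `b`, and they stay pairwise inequivalent.
-/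

section Rays

variable {G : SimpleGraph V} {f g h f' g' : ℕ → V}

def ShareTail (f g : ℕ → V) : Prop := ∃ d₁ d₂, ∀ n, f (d₁ + n) = g (d₂ + n)

lemma ShareTail.refl (f : ℕ → V) : ShareTail f f := ⟨0, 0, fun _ => rfl⟩

lemma ShareTail.trans (hfg : ShareTail f g) (hgh : ShareTail g h) : ShareTail f h := by
  obtain ⟨d₁, d₂, hd⟩ := hfg
  obtain ⟨e₁, e₂, he⟩ := hgh
  refine ⟨d₁ + e₁, e₂ + d₂, fun n => ?_⟩
  rw [add_assoc, hd, ← add_assoc, add_comm d₂, add_assoc, he, add_assoc]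

lemma shareTail_shift (f : ℕ → V) (t : ℕ) : ShareTail (fun n => f (t + n)) f := ⟨0, t, by simp⟩

lemma IsRay.shift (hf : IsRay G f) (t : ℕ) : IsRay G (fun n => f (t + n)) :=
  ⟨fun _ _ h => by simpa using hf.1 h, fun n => hf.2 (t + n)⟩

lemma rayEquiv_refl (hf : Function.Injective f) : RayEquiv G f f := by
  intro S
  obtain ⟨b, hb⟩ := ((Set.Finite.preimage hf.injOn S.finite_toSet).bddAbove)
  have htail : ∀ i, b + 1 ≤ i → f i ∉ S := fun i hi hS => absurd (hb hS) (by omega)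
  exact ⟨b + 1, b + 1, htail, htail, .nil, by simpa using htail _ le_rfl⟩

lemma RayEquiv.mono {G' : SimpleGraph V} (hle : G' ≤ G) (h : RayEquiv G' f g) :
    RayEquiv G f g := by
  intro S
  obtain ⟨a, b, hfa, hgb, w, hw⟩ := h S
  exact ⟨a, b, hfa, hgb, w.mapLe hle, by simpa [Walk.mapLe] using hw⟩

lemma RayEquiv.exists_ge (h : RayEquiv G f g) (S : Finset V) (N : ℕ) :
    ∃ a b, N ≤ a ∧ N ≤ b ∧ (∀ i, a ≤ i → f i ∉ S) ∧ (∀ j, b ≤ j → g j ∉ S) ∧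
      ∃ w : G.Walk (f a) (g b), ∀ v ∈ w.support, v ∉ S := by
  classical
  obtain ⟨a, b, hfa, hgb, w, hw⟩ :=
    h (S ∪ (Finset.range N).image f ∪ (Finset.range N).image g)
  refine ⟨a, b, ?_, ?_, fun i hi hS => hfa i hi (by simp [hS]),
    fun j hj hS => hgb j hj (by simp [hS]), w, fun v hv hS => hw v hv (by simp [hS])⟩
  · by_contra ha
    exact hfa a le_rfl (by simp only [Finset.mem_union, Finset.mem_image, Finset.mem_range]; grind)
  · by_contra hb
    exact hgb b le_rfl (by simp only [Finset.mem_union, Finset.mem_image, Finset.mem_range]; grind)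

lemma RayEquiv.of_shareTail (h : RayEquiv G f g) (hf : ShareTail f f') (hg : ShareTail g g') :
    RayEquiv G f' g' := by
  obtain ⟨d₁, d₂, hd⟩ := hf
  obtain ⟨e₁, e₂, he⟩ := hg
  have hf' : ∀ i, d₂ ≤ i → f' i = f (d₁ + (i - d₂)) := fun i hi => by
    rw [hd, Nat.add_sub_cancel' hi]
  have hg' : ∀ j, e₂ ≤ j → g' j = g (e₁ + (j - e₂)) := fun j hj => by
    rw [he, Nat.add_sub_cancel' hj]
  intro S
  obtain ⟨a, b, ha, hb, hfa, hgb, w, hw⟩ := h.exists_ge S (max d₁ e₁)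
  refine ⟨d₂ + (a - d₁), e₂ + (b - e₁), fun i hi => ?_, fun j hj => ?_,
    w.copy (by rw [hf' _ (by omega)]; congr; omega) (by rw [hg' _ (by omega)]; congr; omega),
    by simpa using hw⟩
  · rw [hf' i (by omega)]
    exact hfa _ (by omega)
  · rw [hg' j (by omega)]
    exact hgb _ (by omega)

end Rays

section Rooting

variable {G : SimpleGraph V} {f : ℕ → V} {r : V}

lemma IsRay.exists_shareTail_of_adj (hf : IsRay G f) (hr : G.Adj r (f 0)) :
    ∃ g, IsRay G g ∧ g 0 = r ∧ ShareTail g f := by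
  by_cases hm : ∃ m, f m = r
  · obtain ⟨m, rfl⟩ := hm
    exact ⟨_, hf.shift m, by simp, shareTail_shift f m⟩
  · push Not at hm
    refine ⟨fun | 0 => r | n + 1 => f n, ⟨?_, ?_⟩, rfl, 1, 0, fun n => by simp [add_comm 1]⟩
    · rintro (_ | m) (_ | n) h
      exacts [rfl, absurd h.symm (hm n), absurd h (hm m), congrArg _ (hf.1 h)]
    · rintro (_ | n)
      exacts [hr, hf.2 n]

lemma IsRay.exists_shareTail_of_walk {v : V} (w : G.Walk r v) (hf : IsRay G f) (hv : f 0 = v) :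
    ∃ g, IsRay G g ∧ g 0 = r ∧ ShareTail g f := by
  induction w generalizing f with
  | nil => exact ⟨f, hf, hv, .refl f⟩
  | cons hadj _ ih =>
    obtain ⟨g, hg, hg0, hgf⟩ := ih hf hv
    obtain ⟨g', hg', hg'0, hg'g⟩ := hg.exists_shareTail_of_adj (hg0 ▸ hadj)
    exact ⟨g', hg', hg'0, hg'g.trans hgf⟩

theorem SimpleGraph.Connected.exists_rooted_rays (hG : G.Connected) (r : V) {F : ℕ → ℕ → V}
    (hF : ∀ i, IsRay G (F i)) (hne : Pairwise fun i j => ¬ RayEquiv G (F i) (F j)) :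
    ∃ g : ℕ → ℕ → V, (∀ i, IsRay G (g i) ∧ g i 0 = r) ∧
      Pairwise fun i j => ¬ RayEquiv G (g i) (g j) := by
  choose g hg hg0 htail using fun i => (hF i).exists_shareTail_of_walk (hG r (F i 0)).some rfl
  exact ⟨g, fun i => ⟨hg i, hg0 i⟩, fun i j hij h => hne hij (h.of_shareTail (htail i) (htail j))⟩

end Rooting

section Forest

variable {G : SimpleGraph V} {f g : ℕ → V} {n p q : ℕ}

def IsRay.walk (hf : IsRay G f) : (n : ℕ) → G.Walk (f 0) (f n)
  | 0 => .nil
  | n + 1 => (hf.walk n).concat (hf.2 n)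

lemma IsRay.length_walk (hf : IsRay G f) (n : ℕ) : (hf.walk n).length = n := by
  induction n with
  | zero => rfl
  | succ n ih => simp [IsRay.walk, ih]

lemma IsRay.getVert_walk (hf : IsRay G f) {k : ℕ} (hk : k ≤ n) : (hf.walk n).getVert k = f k := by
  induction n with
  | zero => simp [IsRay.walk, Nat.le_zero.1 hk]
  | succ n ih =>
    rw [IsRay.walk, Walk.concat_eq_append, Walk.getVert_append']
    rcases Nat.lt_or_eq_of_le hk with hk | rfl
    · rw [if_pos (by rw [hf.length_walk]; omega), ih (by omega)]
    · simp [hf.length_walk]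

lemma IsRay.isPath_walk (hf : IsRay G f) (n : ℕ) : (hf.walk n).IsPath := by
  rw [← Walk.IsPath.getVert_injOn_iff]
  intro i hi j hj hij
  simp only [Set.mem_ofPred_eq, hf.length_walk] at hi hj
  rw [hf.getVert_walk hi, hf.getVert_walk hj] at hij
  exact hf.1 hij

theorem SimpleGraph.IsAcyclic.eq_of_isRay (hG : G.IsAcyclic) (hf : IsRay G f) (hg : IsRay G g)
    (h0 : f 0 = g 0) (hpq : f p = g q) : p = q ∧ ∀ n ≤ p, f n = g n := by
  have hwalk : (hf.walk p).copy h0 hpq = hg.walk q := congrArg Subtype.val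
    ((hG.subsingleton_path _ _).elim ⟨_, (Walk.isPath_copy _ _ _).2 (hf.isPath_walk p)⟩
      ⟨_, hg.isPath_walk q⟩)
  have hpq : p = q := by simpa [hf.length_walk, hg.length_walk] using congrArg Walk.length hwalk
  subst hpq
  refine ⟨rfl, fun n hn => ?_⟩
  simpa [hf.getVert_walk hn, hg.getVert_walk hn] using congrArg (Walk.getVert · n) hwalk

end Forest

section Branching

variable {G : SimpleGraph V} {f g h : ℕ → V} {n p q : ℕ}

/-- For sequences with the same first term, the last index up to which they agree
(`0` when they agree everywhere). -/
noncomputable def branchIndex (f g : ℕ → V) : ℕ := sInf {n | f (n + 1) ≠ g (n + 1)}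

lemma branchIndex_comm (f g : ℕ → V) : branchIndex f g = branchIndex g f := by
  simp only [branchIndex, ne_comm]

lemma eq_of_le_branchIndex (h0 : f 0 = g 0) (hn : n ≤ branchIndex f g) : f n = g n := by
  rcases n with _ | n
  · exact h0
  · by_contra hne
    have := Nat.sInf_le (s := {n | f (n + 1) ≠ g (n + 1)}) hne
    unfold branchIndex at hn
    omega

lemma ne_branchIndex_succ (h0 : f 0 = g 0) (hfg : f ≠ g) :
    f (branchIndex f g + 1) ≠ g (branchIndex f g + 1) := by
  obtain ⟨n, hn⟩ := Function.ne_iff.1 hfg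
  rcases n with _ | n
  · exact absurd h0 hn
  · exact Nat.sInf_mem (s := {n | f (n + 1) ≠ g (n + 1)}) ⟨n, hn⟩

lemma min_branchIndex_le (hfg : f 0 = g 0) (hgh : g 0 = h 0) (hfh : f ≠ h) :
    min (branchIndex f g) (branchIndex g h) ≤ branchIndex f h := by
  by_contra! hlt
  refine ne_branchIndex_succ (hfg.trans hgh) hfh ?_
  rw [eq_of_le_branchIndex hfg (by omega), eq_of_le_branchIndex hgh (by omega)]

theorem SimpleGraph.IsAcyclic.ne_of_branchIndex_lt (hG : G.IsAcyclic) (hf : IsRay G f)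
    (hg : IsRay G g) (h0 : f 0 = g 0) (hfg : f ≠ g) (hp : branchIndex f g < p) : f p ≠ g q :=
  fun hpq => ne_branchIndex_succ h0 hfg ((hG.eq_of_isRay hf hg h0 hpq).2 _ hp)

end Branching

section Fan

variable {K : ℕ → ℕ → ℕ}

/-- Read `K i j` as the height at which branches `i` and `j` of a rooted tree separate: then
`a` and `b` span a double ray, and the branches `σ n` all leave `b` at height `t` and leave `a`
where `b` does. -/
def IsFan (K : ℕ → ℕ → ℕ) (a b t : ℕ) (σ : ℕ → ℕ) : Prop :=
  a ≠ b ∧ Function.Injective σ ∧ (∀ n, σ n ≠ a ∧ σ n ≠ b) ∧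
    ∀ n, K b (σ n) = t ∧ K a (σ n) = K a b

lemma eq_of_lt_of_ultrametric (hsymm : ∀ i j, K i j = K j i)
    (hult : ∀ i j l, i ≠ l → min (K i j) (K j l) ≤ K i l) {i j l : ℕ} (hij : i ≠ j) (hil : i ≠ l)
    (hlt : K i j < K j l) : K i l = K i j := by
  have h₁ := hult i j l hil
  have h₂ := hult i l j hij
  rw [hsymm l j] at h₂
  omega

lemma exists_isFan_of_finite_fibers (hsymm : ∀ i j, K i j = K j i)
    (hult : ∀ i j l, i ≠ l → min (K i j) (K j l) ≤ K i l) {c : ℕ} {T : Set ℕ}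
    (hT : T.Infinite) (hc : c ∉ T) (hfib : ∀ s, (T ∩ K c ⁻¹' {s}).Finite) :
    ∃ a b t σ, IsFan K a b t σ := by
  have himg : (K c '' T).Infinite := fun h => hT (h.of_finite_fibers (K c) fun s _ => hfib s)
  choose τ hτT hτK using Nat.nth_mem_of_infinite himg
  have hmono : StrictMono (fun n => K c (τ n)) := by
    simpa only [hτK] using Nat.nth_strictMono himg
  have hτ : Function.Injective τ := fun m n h => hmono.injective (congrArg (K c) h)
  have hτc : ∀ n, τ n ≠ c := fun n h => hc (h ▸ hτT n)
  have hcross : ∀ m n, m < n → K (τ m) (τ n) = K c (τ m) := fun m n hmn => by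
    rw [eq_of_lt_of_ultrametric hsymm hult (hτc m) (hτ.ne hmn.ne) (hsymm (τ m) c ▸ hmono hmn),
      hsymm]
  refine ⟨τ 0, τ 1, K c (τ 1), fun n => τ (n + 2), hτ.ne (by omega), fun m n h => by
    simpa using hτ h, fun n => ⟨hτ.ne (by omega), hτ.ne (by omega)⟩, fun n =>
    ⟨hcross 1 (n + 2) (by omega), by rw [hcross 0 (n + 2) (by omega), hcross 0 1 (by omega)]⟩⟩

lemma exists_isFan_of_infinite_fiber (hsymm : ∀ i j, K i j = K j i)
    (hult : ∀ i j l, i ≠ l → min (K i j) (K j l) ≤ K i l) {c s : ℕ} {T : Set ℕ}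
    (hT : T.Infinite) (hc : c ∉ T) (hK : ∀ i ∈ T, K c i = s) : ∃ a b t σ, IsFan K a b t σ := by
  obtain ⟨b, hb⟩ := hT.nonempty
  have hT' : (T \ {b}).Infinite := hT.sdiff (Set.finite_singleton b)
  by_cases hfib : ∀ u, (T \ {b} ∩ K b ⁻¹' {u}).Finite
  · exact exists_isFan_of_finite_fibers hsymm hult hT' (fun h => h.2 rfl) hfib
  push Not at hfib
  obtain ⟨u, hu⟩ := hfib
  set σ : ℕ → ℕ := fun n => hu.natEmbedding _ n
  have hσ : ∀ n, (σ n ∈ T ∧ σ n ≠ b) ∧ K b (σ n) = u := fun n => (hu.natEmbedding _ n).2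
  refine ⟨c, b, u, σ, fun h => hc (h ▸ hb), fun m n h => (hu.natEmbedding _).injective
    (Subtype.ext h), fun n => ⟨fun h => hc (h ▸ (hσ n).1.1), (hσ n).1.2⟩,
    fun n => ⟨(hσ n).2, by rw [hK _ (hσ n).1.1, hK b hb]⟩⟩

lemma exists_isFan (hsymm : ∀ i j, K i j = K j i)
    (hult : ∀ i j l, i ≠ l → min (K i j) (K j l) ≤ K i l) : ∃ a b t σ, IsFan K a b t σ := by
  by_cases h : ∃ s, ({0}ᶜ ∩ K 0 ⁻¹' {s}).Infinite
  · obtain ⟨s, hs⟩ := h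
    exact exists_isFan_of_infinite_fiber hsymm hult hs (fun h => h.1 rfl) fun i hi => hi.2
  · push Not at h
    exact exists_isFan_of_finite_fibers hsymm hult (Set.finite_singleton 0).infinite_compl
      (by simp) h

end Fan

section DoubleRay

variable {G : SimpleGraph V} {f g h : ℕ → V} {k t : ℕ}

def joinRays (f g : ℕ → V) (k : ℕ) : ℤ → V :=
  fun z => if 0 ≤ z then g (k + z.toNat) else f (k + (-z).toNat)

lemma joinRays_of_nonneg {z : ℤ} (hz : 0 ≤ z) : joinRays f g k z = g (k + z.toNat) := if_pos hz

lemma joinRays_of_nonpos (hk : f k = g k) {z : ℤ} (hz : z ≤ 0) :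
    joinRays f g k z = f (k + (-z).toNat) := by
  unfold joinRays
  split_ifs with h
  · rw [show z = 0 by omega]
    simpa using hk.symm
  · rfl

lemma joinRays_eq_or (z : ℤ) :
    (∃ q, joinRays f g k z = g q) ∨ ∃ q, k < q ∧ joinRays f g k z = f q := by
  unfold joinRays
  split_ifs with hz
  exacts [.inl ⟨_, rfl⟩, .inr ⟨_, by omega, rfl⟩]

lemma isDoubleRay_joinRays (hf : IsRay G f) (hg : IsRay G g) (hk : f k = g k)
    (hfg : ∀ p q, k < p → k < q → f p ≠ g q) : IsDoubleRay G (joinRays f g k) := by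
  refine ⟨fun z w hzw => ?_, fun z => ?_⟩
  · wlog hle : z ≤ w generalizing z w
    · exact (this w z hzw.symm (by omega)).symm
    by_cases hz : 0 ≤ z
    · rw [joinRays_of_nonneg hz, joinRays_of_nonneg (hz.trans hle)] at hzw
      have := hg.1 hzw
      omega
    by_cases hw : w ≤ 0
    · rw [joinRays_of_nonpos hk (by omega), joinRays_of_nonpos hk hw] at hzw
      have := hf.1 hzw
      omega
    rw [joinRays_of_nonpos hk (by omega), joinRays_of_nonneg (by omega)] at hzw
    exact absurd hzw (hfg _ _ (by omega) (by omega))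
  · by_cases hz : 0 ≤ z
    · rw [joinRays_of_nonneg hz, joinRays_of_nonneg (by omega), show (z + 1).toNat = z.toNat + 1
        by omega]
      exact hg.2 _
    · rw [joinRays_of_nonpos hk (by omega), joinRays_of_nonpos hk (by omega),
        show (-z).toNat = (-(z + 1)).toNat + 1 by omega]
      exact (hf.2 _).symm

lemma IsRay.deleteEdges_drEdges {D : ℤ → V} (hf : IsRay G f) (hD : ∀ n z, f (n + 1) ≠ D z) :
    IsRay (G.deleteEdges (drEdges D)) f := by
  refine ⟨hf.1, fun n => (deleteEdges_adj ..).2 ⟨hf.2 n, ?_⟩⟩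
  rintro ⟨z, hz⟩
  rcases Sym2.eq_iff.1 hz with ⟨-, h⟩ | ⟨-, h⟩
  exacts [hD n (z + 1) h, hD n z h]

theorem SimpleGraph.IsAcyclic.apply_ne_joinRays (hG : G.IsAcyclic) (hf : IsRay G f)
    (hg : IsRay G g) (hh : IsRay G h) (hfg0 : f 0 = g 0) (hgh0 : g 0 = h 0) (hgh : g ≠ h)
    (hfh : f ≠ h) (hght : branchIndex g h = t)
    (hfh_eq : branchIndex f h = branchIndex f g) {p : ℕ} (hp : t < p) (z : ℤ) :
    h p ≠ joinRays f g (branchIndex f g) z := by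
  have hg_ne : ∀ q, h p ≠ g q := fun q hq => by
    rcases le_or_gt q t with hqt | hqt
    · rw [eq_of_le_branchIndex hgh0 (hght ▸ hqt)] at hq
      exact absurd (hh.1 hq) (by omega)
    · exact hG.ne_of_branchIndex_lt hg hh hgh0 hgh (hght ▸ hqt) hq.symm
  rcases joinRays_eq_or (f := f) (g := g) (k := branchIndex f g) z with ⟨q, hq⟩ | ⟨q, hq, hzq⟩
  · exact hq ▸ hg_ne q
  · rw [hzq]
    exact fun hpq => hG.ne_of_branchIndex_lt hf hh (hfg0.trans hgh0) hfh (hfh_eq ▸ hq) hpq.symm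

end DoubleRay

/-- A tree with infinitely many ends contains a double ray `D` such that some
connected component of the tree minus the edges of `D` has infinitely many ends. -/
theorem stmt_4 (G : SimpleGraph V) (hT : G.IsTree)
    (h : ∃ F : ℕ → ℕ → V, (∀ i, IsRay G (F i)) ∧
      Pairwise fun i j => ¬ RayEquiv G (F i) (F j)) :
    ∃ D : ℤ → V, IsDoubleRay G D ∧
      ∃ c : (G.deleteEdges (drEdges D)).ConnectedComponent,
        ∃ F : ℕ → ℕ → V,
          (∀ i, IsRay (G.deleteEdges (drEdges D)) (F i) ∧
            (G.deleteEdges (drEdges D)).connectedComponentMk (F i 0) = c) ∧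
          Pairwise fun i j => ¬ RayEquiv (G.deleteEdges (drEdges D)) (F i) (F j) := by
  obtain ⟨F, hF, hFne⟩ := h
  obtain ⟨g, hg, hgne⟩ := hT.connected.exists_rooted_rays (F 0 0) hF hFne
  have hroot : ∀ i j, g i 0 = g j 0 := fun i j => (hg i).2.trans (hg j).2.symm
  have hdist : ∀ {i j}, i ≠ j → g i ≠ g j := fun hij heq =>
    hgne hij (heq ▸ rayEquiv_refl (hg _).1.1)
  obtain ⟨a, b, t, σ, hab, hσ, hσab, hbranch⟩ :=
    exists_isFan (K := fun i j => branchIndex (g i) (g j)) (fun i j => branchIndex_comm _ _)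
      fun i j l hil => min_branchIndex_le (hroot i j) (hroot j l) (hdist hil)
  set D := joinRays (g a) (g b) (branchIndex (g a) (g b))
  have hD : IsDoubleRay G D := isDoubleRay_joinRays (hg a).1 (hg b).1
    (eq_of_le_branchIndex (hroot a b) le_rfl)
    fun p q hp _ => hT.isAcyclic.ne_of_branchIndex_lt (hg a).1 (hg b).1 (hroot a b) (hdist hab) hp
  refine ⟨D, hD, (G.deleteEdges (drEdges D)).connectedComponentMk (g b t),
    fun i n => g (σ i) (t + n), fun i => ⟨?_, ?_⟩, fun i j hij hE =>
    hgne (hσ.ne hij) ((hE.mono (deleteEdges_le _)).of_shareTail (shareTail_shift _ t)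
      (shareTail_shift _ t))⟩
  · refine ((hg (σ i)).1.shift t).deleteEdges_drEdges fun n z => ?_
    exact hT.isAcyclic.apply_ne_joinRays (hg a).1 (hg b).1 (hg (σ i)).1 (hroot a b)
      (hroot b (σ i)) (hdist (hσab i).2.symm) (hdist (hσab i).1.symm) (hbranch i).1
      (hbranch i).2 (by omega) z
  · exact congrArg _ (eq_of_le_branchIndex (hroot b (σ i)) (hbranch i).1.ge).symm
end

section
/- Let G be a connected graph, S a finite set of vertices of G, and H a set of pairwise edge-disjoint subgraphs of G such that every connected component of every member of H meets S. Then there exists a finite connected subgraph T of G containing all vertices of S such that at most 2|S| − 2 members of H share an edge with T. -/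
open SimpleGraph

variable {V : Type*}

/-!
Grow the connector greedily from one vertex of `S`. While some vertex of `S` lies outside the
current connector `T`, follow any walk from `T` to `S \ T`, keeping a walk from `T` that shares
edges with at most one member of `𝓗`. When the walk enters an edge of a member `A`, the component
of `A` containing that edge leads inside `A` to a vertex `s ∈ S`: if `s ∈ T`, restart from `s`
(only `A` has been used); otherwise the walk so far followed by the path to `s` reaches `S \ T`
sharing edges with at most two members. Each round thus adds a vertex of `S` and at most two
members, and there are `|S| - 1` rounds.
-/

namespace SimpleGraph

variable {G : SimpleGraph V}

def edgeSharers (𝓗 : Set G.Subgraph) (E : Set (Sym2 V)) : Set G.Subgraph :=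
  {A ∈ 𝓗 | ¬ Disjoint A.edgeSet E}

section edgeSharers

variable {𝓗 : Set G.Subgraph} {E F : Set (Sym2 V)}

@[simp]
lemma edgeSharers_empty : edgeSharers 𝓗 ∅ = ∅ := by
  simp [edgeSharers]

lemma edgeSharers_union : edgeSharers 𝓗 (E ∪ F) = edgeSharers 𝓗 E ∪ edgeSharers 𝓗 F := by
  ext A
  simp only [edgeSharers, Set.disjoint_union_right, Set.mem_ofPred_eq, Set.mem_union]
  tauto

lemma edgeSharers_insert_of_forall_notMem {e : Sym2 V} (he : ∀ A ∈ 𝓗, e ∉ A.edgeSet) :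
    edgeSharers 𝓗 (insert e E) = edgeSharers 𝓗 E := by
  ext A
  simp only [edgeSharers, Set.disjoint_insert_right, Set.mem_ofPred_eq]
  exact ⟨fun ⟨hA, h⟩ => ⟨hA, fun hE => h ⟨he A hA, hE⟩⟩, fun ⟨hA, h⟩ => ⟨hA, fun h' => h h'.2⟩⟩

lemma edgeSharers_subset_singleton (hdisj : 𝓗.PairwiseDisjoint Subgraph.edgeSet)
    {A : G.Subgraph} (hA : A ∈ 𝓗) (hE : E ⊆ A.edgeSet) : edgeSharers 𝓗 E ⊆ {A} := by
  rintro B ⟨hB, hBE⟩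
  by_contra hne
  exact hBE ((hdisj hB hA hne).mono_right hE)

end edgeSharers

variable {𝓗 : Set G.Subgraph} {S U : Set V}

lemma exists_walk_sharing_two_of_walk (hdisj : 𝓗.PairwiseDisjoint Subgraph.edgeSet)
    (hmeet : ∀ A ∈ 𝓗, ∀ v ∈ A.verts, ∃ s ∈ S, ∃ w : G.Walk v s, w.toSubgraph ≤ A)
    {a v b : V} (ha : a ∈ U) (W : G.Walk a v) {H : G.Subgraph}
    (hW : edgeSharers 𝓗 W.edgeSet ⊆ {H}) (P : G.Walk v b) (hb : b ∈ S \ U) :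
    ∃ a' ∈ U, ∃ b' ∈ S \ U, ∃ W' : G.Walk a' b', ∃ H₁ H₂ : G.Subgraph,
      edgeSharers 𝓗 W'.edgeSet ⊆ {H₁, H₂} := by
  induction P generalizing a H with
  | nil => exact ⟨a, ha, _, hb, W, H, H, hW.trans (by simp)⟩
  | @cons x y z hxy P ih =>
    by_cases hmem : ∃ A ∈ 𝓗, s(x, y) ∈ A.edgeSet
    · obtain ⟨A, hA, hxyA⟩ := hmem
      obtain ⟨s, hs, Q, hQ⟩ := hmeet A hA x (Subgraph.mem_edgeSet.mp hxyA).fst_mem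
      have hQA : Q.edgeSet ⊆ A.edgeSet := Walk.edgeSet_toSubgraph Q ▸ Subgraph.edgeSet_mono hQ
      by_cases hsU : s ∈ U
      · refine ih hsU (Q.reverse.concat hxy) (edgeSharers_subset_singleton hdisj hA ?_) hb
        rw [Walk.edgeSet_concat, Walk.edgeSet_reverse]
        exact Set.insert_subset hxyA hQA
      · refine ⟨a, ha, s, ⟨hs, hsU⟩, W.append Q, H, A, ?_⟩
        rw [Walk.edgeSet_append, edgeSharers_union, Set.insert_eq]
        exact Set.union_subset_union hW (edgeSharers_subset_singleton hdisj hA hQA)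
    · push Not at hmem
      refine ih ha (W.concat hxy) (H := H) ?_ hb
      rwa [Walk.edgeSet_concat, edgeSharers_insert_of_forall_notMem hmem]

lemma exists_walk_sharing_two (hc : G.Connected) (hdisj : 𝓗.PairwiseDisjoint Subgraph.edgeSet)
    (hmeet : ∀ A ∈ 𝓗, ∀ v ∈ A.verts, ∃ s ∈ S, ∃ w : G.Walk v s, w.toSubgraph ≤ A)
    {a b : V} (ha : a ∈ U) (hb : b ∈ S \ U) :
    ∃ a' ∈ U, ∃ b' ∈ S \ U, ∃ W : G.Walk a' b', ∃ H₁ H₂ : G.Subgraph,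
      edgeSharers 𝓗 W.edgeSet ⊆ {H₁, H₂} :=
  exists_walk_sharing_two_of_walk hdisj hmeet ha Walk.nil (H := ⊥) (by simp)
    (hc.preconnected a b).some hb

lemma exists_connector_sharing_le (hc : G.Connected)
    (hdisj : 𝓗.PairwiseDisjoint Subgraph.edgeSet)
    (hmeet : ∀ A ∈ 𝓗, ∀ v ∈ A.verts, ∃ s ∈ S, ∃ w : G.Walk v s, w.toSubgraph ≤ A)
    (hS : S.Finite) (T : G.Subgraph) (hT : T.Connected) (hTf : T.verts.Finite)
    (hHT : (edgeSharers 𝓗 T.edgeSet).Finite) :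
    ∃ T' : G.Subgraph, T'.Connected ∧ T'.verts.Finite ∧ S ⊆ T'.verts ∧
      (edgeSharers 𝓗 T'.edgeSet).Finite ∧
      (edgeSharers 𝓗 T'.edgeSet).ncard ≤
        (edgeSharers 𝓗 T.edgeSet).ncard + 2 * (S \ T.verts).ncard := by
  induction hn : (S \ T.verts).ncard using Nat.strong_induction_on generalizing T with
  | _ n ih =>
  by_cases hST : S ⊆ T.verts
  · exact ⟨T, hT, hTf, hST, hHT, by omega⟩
  obtain ⟨b, hb⟩ : (S \ T.verts).Nonempty := Set.sdiff_nonempty.mpr hST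
  obtain ⟨a, ha, b', hb', W, H₁, H₂, hW⟩ :=
    exists_walk_sharing_two hc hdisj hmeet hT.nonempty.some_mem hb
  set T₁ := T ⊔ W.toSubgraph
  have hT₁ : T₁.Connected :=
    Subgraph.connected_sup hT.preconnected W.toSubgraph_connected.preconnected
      ⟨a, ha, W.start_mem_verts_toSubgraph⟩
  have hT₁f : T₁.verts.Finite := by
    simpa [T₁, Subgraph.verts_sup, Walk.verts_toSubgraph] using hTf.union W.support.finite_toSet
  have hsharers : edgeSharers 𝓗 T₁.edgeSet ⊆ edgeSharers 𝓗 T.edgeSet ∪ {H₁, H₂} := by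
    rw [Subgraph.edgeSet_sup, edgeSharers_union, Walk.edgeSet_toSubgraph]
    exact Set.union_subset_union_right _ hW
  have hfin : (edgeSharers 𝓗 T.edgeSet ∪ {H₁, H₂}).Finite := hHT.union (Set.toFinite _)
  have hcard : (edgeSharers 𝓗 T₁.edgeSet).ncard ≤ (edgeSharers 𝓗 T.edgeSet).ncard + 2 :=
    calc _ ≤ (edgeSharers 𝓗 T.edgeSet ∪ {H₁, H₂}).ncard := Set.ncard_le_ncard hsharers hfin
      _ ≤ (edgeSharers 𝓗 T.edgeSet).ncard + ({H₁, H₂} : Set G.Subgraph).ncard :=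
        Set.ncard_union_le _ _
      _ ≤ _ := by grw [Set.ncard_insert_le, Set.ncard_singleton]
  have hlt : (S \ T₁.verts).ncard < n := by
    rw [← hn]
    refine Set.ncard_lt_ncard ⟨Set.sdiff_subset_sdiff_right (Subgraph.verts_mono le_sup_left),
      fun h => (h hb').2 (Or.inr W.end_mem_verts_toSubgraph)⟩ hS.sdiff
  obtain ⟨T', hT', hT'f, hST', hHT', hcard'⟩ := ih _ hlt T₁ hT₁ hT₁f (hfin.subset hsharers) rfl
  exact ⟨T', hT', hT'f, hST', hHT', by omega⟩

end SimpleGraph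

/-- In a connected graph, given a finite vertex set `S` and a family of pairwise
edge-disjoint subgraphs each of whose components meets `S`, there is a finite
connector of `S` sharing an edge with at most `2|S| - 2` members of the family. -/
theorem stmt_10 (G : SimpleGraph V) (hc : G.Connected) (S : Finset V)
    (𝓗 : Set G.Subgraph)
    (hdisj : ∀ H₁ ∈ 𝓗, ∀ H₂ ∈ 𝓗, H₁ ≠ H₂ → Disjoint H₁.edgeSet H₂.edgeSet)
    (hmeet : ∀ A ∈ 𝓗, ∀ v ∈ A.verts, ∃ s ∈ S, ∃ w : G.Walk v s, w.toSubgraph ≤ A) :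
    ∃ T : G.Subgraph, T.Connected ∧ T.verts.Finite ∧ ↑S ⊆ T.verts ∧
      {A ∈ 𝓗 | ¬ Disjoint A.edgeSet T.edgeSet}.Finite ∧
      {A ∈ 𝓗 | ¬ Disjoint A.edgeSet T.edgeSet}.ncard ≤ 2 * S.card - 2 := by
  obtain ⟨v, hv⟩ : ∃ v, (↑S \ {v} : Set V).ncard ≤ S.card - 1 := by
    rcases S.eq_empty_or_nonempty with rfl | ⟨v, hv⟩
    · exact ⟨hc.nonempty.some, by simp⟩
    · exact ⟨v, by rw [Set.ncard_sdiff_singleton_of_mem hv, Set.ncard_coe_finset]⟩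
  obtain ⟨T, hT, hTf, hST, hHT, hcard⟩ :=
    exists_connector_sharing_le hc hdisj hmeet S.finite_toSet (G.singletonSubgraph v)
      Subgraph.singletonSubgraph_connected (Set.finite_singleton v)
      (by simp [edgeSet_singletonSubgraph])
  simp only [edgeSet_singletonSubgraph, edgeSharers_empty, Set.ncard_empty,
    singletonSubgraph_verts, zero_add] at hcard
  exact ⟨T, hT, hTf, hST, hHT, hcard.trans (by omega)⟩
end

section
/- Let G be a countable graph with an end ω of finite vertex-degree, and let R be a countably infinite set of rays of G all converging to ω. Then G has a locally finite subgraph H that has exactly one end, that end having finite vertex-degree, such that H contains a tail of every ray in R. -/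
open SimpleGraph

variable {V : Type*}

/-!
Enumerate `V` by an exhaustion `X 0 ⊆ X 1 ⊆ ⋯` by finite sets, and `R` as `r 0, r 1, …`.
As each `r n` is equivalent to `W`, for all `n, m` there is a walk from a tail of `W` to a tail of
`r n` beyond index `m`, the walk and both tails avoiding `X (max n m)`. Let `H` be the union of `W`,
a tail of each `r n` avoiding `X n`, and all these walks. A vertex of `X N` lies only on the tails
with `n < N` and the walks with `n, m < N`, so `H` is locally finite. Given a finite `S ⊆ X M`,
all but finitely many vertices of `H` lie on a tail of `W` or of some `r n` avoiding `S`, or on a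
walk with `max n m ≥ M`, and are therefore joined to a tail of `W` outside `S`; so every ray of
`H` is equivalent to `W`. Disjoint rays of `H` are disjoint rays of `G`, so the end of `H` has
vertex-degree at most that of `W`.
-/

variable {V' : Type*}

theorem exists_monotone_finset_cover [Countable V] :
    ∃ X : ℕ → Finset V, Monotone X ∧ ∀ v, ∃ n, v ∈ X n := by
  obtain ⟨ι, hι⟩ := Countable.exists_injective_nat V
  refine ⟨fun n => (Finset.range n).preimage ι hι.injOn, fun m n hmn v hv => ?_,
    fun v => ⟨ι v + 1, by simp⟩⟩
  simp only [Finset.mem_preimage, Finset.mem_range] at hv ⊢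
  omega

theorem Monotone.exists_subset_of_cover {X : ℕ → Finset V} (hX : Monotone X)
    (hcover : ∀ v, ∃ n, v ∈ X n) (S : Finset V) : ∃ M, S ⊆ X M := by
  choose N hN using hcover
  exact ⟨S.sup N, fun v hv => hX (Finset.le_sup hv) (hN v)⟩

theorem exists_forall_ge_notMem {f : ℕ → V} (hf : Function.Injective f) {T : Set V}
    (hT : T.Finite) : ∃ N, ∀ i, N ≤ i → f i ∉ T := by
  have h := hf.tendsto_cofinite.eventually hT.eventually_cofinite_notMem
  rwa [Nat.cofinite_eq_atTop, Filter.eventually_atTop] at h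

theorem exists_eq_of_mem_rayEdges {f : ℕ → V} {v w : V} (h : s(v, w) ∈ rayEdges f) :
    ∃ j, f j = v := by
  obtain ⟨n, hn⟩ := h
  rcases Sym2.eq_iff.1 hn with ⟨h, -⟩ | ⟨h, -⟩
  exacts [⟨n, h.symm⟩, ⟨n + 1, h.symm⟩]

theorem rayEdges_shift_subset (f : ℕ → V) (k : ℕ) :
    rayEdges (fun i => f (k + i)) ⊆ rayEdges f := by
  rintro e ⟨i, rfl⟩
  exact ⟨k + i, rfl⟩

theorem finite_setOf_mem_rayEdges {f : ℕ → V} (hf : Function.Injective f) (v : V) :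
    {w | s(v, w) ∈ rayEdges f}.Finite := by
  have hpre : (f ⁻¹' {v}).Finite := (Set.finite_singleton v).preimage hf.injOn
  refine ((hpre.biUnion fun j _ => Set.toFinite {j - 1, j + 1}).image f).subset ?_
  rintro w ⟨n, hn⟩
  rcases Sym2.eq_iff.1 hn with ⟨rfl, rfl⟩ | ⟨rfl, rfl⟩
  · exact ⟨n + 1, Set.mem_biUnion (x := n) rfl (by simp), rfl⟩
  · exact ⟨n, Set.mem_biUnion (x := n + 1) rfl (by simp), rfl⟩

section Rays

variable {G : SimpleGraph V} {G' : SimpleGraph V'}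

def ReachableAvoiding (G : SimpleGraph V) (S : Finset V) (u v : V) : Prop :=
  ∃ p : G.Walk u v, ∀ x ∈ p.support, x ∉ S

namespace ReachableAvoiding

variable {S : Finset V} {u v w : V}

theorem refl (hu : u ∉ S) : ReachableAvoiding G S u u :=
  ⟨Walk.nil, by simpa using hu⟩

theorem symm : ReachableAvoiding G S u v → ReachableAvoiding G S v u
  | ⟨p, hp⟩ => ⟨p.reverse, by simpa using hp⟩

theorem trans : ReachableAvoiding G S u v → ReachableAvoiding G S v w →
    ReachableAvoiding G S u w
  | ⟨p, hp⟩, ⟨q, hq⟩ => ⟨p.append q, fun x hx => by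
      rcases (Walk.mem_support_append_iff p q).1 hx with hx | hx
      exacts [hp x hx, hq x hx]⟩

theorem of_chain {f : ℕ → V} {i : ℕ} (hadj : ∀ j, i ≤ j → G.Adj (f j) (f (j + 1)))
    (hS : ∀ j, i ≤ j → f j ∉ S) : ∀ j, i ≤ j → ReachableAvoiding G S (f i) (f j) := by
  refine Nat.le_induction (refl (hS i le_rfl)) fun j hij ih => ih.trans ?_
  exact ⟨(hadj j hij).toWalk, by simp [hS j hij, hS (j + 1) (by omega)]⟩

end ReachableAvoiding

theorem SimpleGraph.Walk.reachableAvoiding_of_mem_support {S : Finset V} {u v w : V}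
    (p : G.Walk u w) (hp : ∀ x ∈ p.support, x ∉ S) (hv : v ∈ p.support) :
    ReachableAvoiding G S u v := by
  classical
  exact ⟨p.takeUntil v hv, fun x hx => hp x (p.support_takeUntil_subset_support hv hx)⟩

theorem IsRay.map {f : ℕ → V} (φ : G →g G') (hφ : Function.Injective φ) (hf : IsRay G f) :
    IsRay G' (φ ∘ f) :=
  ⟨hφ.comp hf.1, fun n => φ.map_adj (hf.2 n)⟩

theorem RayEquiv.map {f g : ℕ → V} (φ : G →g G') (hφ : Function.Injective φ)
    (h : RayEquiv G f g) : RayEquiv G' (φ ∘ f) (φ ∘ g) := by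
  intro S
  obtain ⟨a, b, hf, hg, p, hp⟩ := h (S.preimage φ hφ.injOn)
  refine ⟨a, b, fun i hi hS => hf i hi (by simpa using hS),
    fun j hj hS => hg j hj (by simpa using hS), p.map φ, fun x hx => ?_⟩
  obtain ⟨y, hy, rfl⟩ := List.mem_map.1 ((p.support_map φ) ▸ hx)
  simpa using hp y hy

theorem RayEquiv.exists_reachableAvoiding_ge {f g : ℕ → V} (h : RayEquiv G f g)
    (S : Finset V) (m : ℕ) :
    ∃ a b, m ≤ b ∧ (∀ i, a ≤ i → f i ∉ S) ∧ (∀ j, b ≤ j → g j ∉ S) ∧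
      ReachableAvoiding G S (f a) (g b) := by
  classical
  obtain ⟨a, b, hf, hg, p, hp⟩ := h (S ∪ (Finset.range m).image g)
  refine ⟨a, b, ?_, fun i hi hS => hf i hi (Finset.mem_union_left _ hS),
    fun j hj hS => hg j hj (Finset.mem_union_left _ hS),
    p, fun x hx hS => hp x hx (Finset.mem_union_left _ hS)⟩
  by_contra! hb
  exact hg b le_rfl (Finset.mem_union_right _ (Finset.mem_image_of_mem g (by simpa using hb)))

def ReachableFromTail (G : SimpleGraph V) (W : ℕ → V) (S : Finset V) (v : V) : Prop :=
  ∃ a, (∀ i, a ≤ i → W i ∉ S) ∧ ReachableAvoiding G S (W a) v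

theorem ReachableFromTail.of_tail {W : ℕ → V} {S : Finset V} {j : ℕ}
    (h : ∀ i, j ≤ i → W i ∉ S) : ReachableFromTail G W S (W j) :=
  ⟨j, h, .refl (h j le_rfl)⟩

theorem ReachableFromTail.trans {W : ℕ → V} {S : Finset V} {u v : V}
    (h : ReachableFromTail G W S u) (h' : ReachableAvoiding G S u v) :
    ReachableFromTail G W S v :=
  let ⟨a, ha, hu⟩ := h
  ⟨a, ha, hu.trans h'⟩

theorem IsRay.rayEquiv_of_reachableFromTail {W g : ℕ → V} (hg : IsRay G g)
    (h : ∀ S : Finset V, ∃ B : Set V, B.Finite ∧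
      ∀ v w, v ∉ B → v ∉ S → G.Adj v w → ReachableFromTail G W S v) :
    RayEquiv G W g := by
  intro S
  obtain ⟨B, hB, hreach⟩ := h S
  obtain ⟨j, hj⟩ := exists_forall_ge_notMem hg.1 (hB.union S.finite_toSet)
  have hjS : ∀ i, j ≤ i → g i ∉ S := fun i hi hS => hj i hi (Or.inr hS)
  obtain ⟨a, ha, hp⟩ :=
    hreach (g j) (g (j + 1)) (fun hjB => hj j le_rfl (Or.inl hjB)) (hjS j le_rfl) (hg.2 j)
  exact ⟨a, j, ha, hjS, hp⟩

/-- `EndVertexDegree G f k` is by definition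
`HasDisjointEquivRays G f k ∧ ¬ HasDisjointEquivRays G f (k + 1)`. -/
def HasDisjointEquivRays (G : SimpleGraph V) (f : ℕ → V) (k : ℕ) : Prop :=
  ∃ F : Fin k → ℕ → V, (∀ i, IsRay G (F i) ∧ RayEquiv G f (F i)) ∧
    Pairwise fun i j => Disjoint (Set.range (F i)) (Set.range (F j))

theorem hasDisjointEquivRays_zero (f : ℕ → V) : HasDisjointEquivRays G f 0 :=
  ⟨Fin.elim0, fun i => i.elim0, fun i => i.elim0⟩

theorem HasDisjointEquivRays.map {f : ℕ → V} {k : ℕ} (φ : G →g G') (hφ : Function.Injective φ)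
    (h : HasDisjointEquivRays G f k) : HasDisjointEquivRays G' (φ ∘ f) k := by
  obtain ⟨F, hF, hdisj⟩ := h
  refine ⟨fun i => φ ∘ F i, fun i => ⟨(hF i).1.map φ hφ, (hF i).2.map φ hφ⟩, fun i j hij => ?_⟩
  simpa only [Set.range_comp] using (Set.disjoint_image_iff hφ).2 (hdisj hij)

theorem exists_endVertexDegree_of_not_hasDisjointEquivRays {f : ℕ → V} {n : ℕ}
    (h : ¬ HasDisjointEquivRays G f n) : ∃ m, EndVertexDegree G f m := by
  induction n with
  | zero => exact absurd (hasDisjointEquivRays_zero f) h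
  | succ n ih =>
    by_cases hn : HasDisjointEquivRays G f n
    exacts [⟨n, hn, h⟩, ih hn]

end Rays

/-- Avoiding `X (max n m)` makes the union of all the walks locally finite, while `m ≤ b n m`
lets a tail of `r n` be reached from a walk avoiding any prescribed `X M`. -/
structure Linkage (G : SimpleGraph V) (W : ℕ → V) (r : ℕ → ℕ → V) (X : ℕ → Finset V) where
  a : ℕ → ℕ → ℕ
  b : ℕ → ℕ → ℕ
  walk : ∀ n m, G.Walk (W (a n m)) (r n (b n m))
  le_b : ∀ n m, m ≤ b n m
  spine_notMem : ∀ n m i, a n m ≤ i → W i ∉ X (max n m)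
  ray_notMem : ∀ n m i, b n m ≤ i → r n i ∉ X (max n m)
  walk_notMem : ∀ n m, ∀ x ∈ (walk n m).support, x ∉ X (max n m)

namespace Linkage

variable {G : SimpleGraph V} {W : ℕ → V} {r : ℕ → ℕ → V} {X : ℕ → Finset V}

theorem nonempty (h : ∀ n, RayEquiv G W (r n)) (X : ℕ → Finset V) :
    Nonempty (Linkage G W r X) := by
  choose a b hle hspine hray walk hwalk using
    fun n m => (h n).exists_reachableAvoiding_ge (X (max n m)) m
  exact ⟨⟨a, b, walk, hle, hspine, hray, hwalk⟩⟩

variable (L : Linkage G W r X)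

def edges : Set (Sym2 V) :=
  rayEdges W ∪ (⋃ n, rayEdges fun i => r n (L.b n n + i)) ∪
    ⋃ n, ⋃ m, {e | e ∈ (L.walk n m).edges}

def graph : SimpleGraph V := G ⊓ fromEdgeSet L.edges

theorem graph_le : L.graph ≤ G := inf_le_left

theorem graph_adj {u v : V} : L.graph.Adj u v ↔ G.Adj u v ∧ s(u, v) ∈ L.edges := by
  simp only [graph, inf_adj, fromEdgeSet_adj]
  exact ⟨fun h => ⟨h.1, h.2.1⟩, fun h => ⟨h.1, h.2, h.1.ne⟩⟩

theorem isRay_graph (hW : IsRay G W) : IsRay L.graph W :=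
  ⟨hW.1, fun n => L.graph_adj.2 ⟨hW.2 n, Or.inl (Or.inl ⟨n, rfl⟩)⟩⟩

theorem graph_adj_ray (hr : ∀ n, IsRay G (r n)) {n i : ℕ} (hi : L.b n n ≤ i) :
    L.graph.Adj (r n i) (r n (i + 1)) := by
  obtain ⟨j, rfl⟩ := Nat.exists_eq_add_of_le hi
  exact L.graph_adj.2 ⟨(hr n).2 _, Or.inl (Or.inr (Set.mem_iUnion.2 ⟨n, j, rfl⟩))⟩

theorem walk_edges_subset (n m : ℕ) : ∀ e ∈ (L.walk n m).edges, e ∈ L.graph.edgeSet := by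
  intro e he
  induction e using Sym2.ind with
  | _ u v =>
    exact L.graph_adj.2
      ⟨(L.walk n m).edges_subset_edgeSet he, Or.inr (Set.mem_iUnion₂.2 ⟨n, m, he⟩)⟩

theorem reachableFromTail_of_mem_walk {S : Finset V} {n m : ℕ} (hS : S ⊆ X (max n m)) {v : V}
    (hv : v ∈ (L.walk n m).support) : ReachableFromTail L.graph W S v := by
  refine ⟨L.a n m, fun i hi hiS => L.spine_notMem n m i hi (hS hiS), ?_⟩
  refine ((L.walk n m).transfer L.graph (L.walk_edges_subset n m)).reachableAvoiding_of_mem_support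
    (fun x hx hxS => ?_) (by rwa [Walk.support_transfer])
  rw [Walk.support_transfer] at hx
  exact L.walk_notMem n m x hx (hS hxS)

theorem reachableFromTail_of_ray (hr : ∀ n, IsRay G (r n)) (hX : Monotone X) {S : Finset V}
    {M : ℕ} (hSM : S ⊆ X M) {n i : ℕ} (hi : L.b n n ≤ i) (hS : ∀ j, i ≤ j → r n j ∉ S) :
    ReachableFromTail L.graph W S (r n i) := by
  set m := max i M
  have hend := L.reachableFromTail_of_mem_walk
    (hSM.trans (hX ((le_max_right i M).trans (le_max_right n m)))) (L.walk n m).end_mem_support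
  have hib : i ≤ L.b n m := (le_max_left i M).trans (L.le_b n m)
  exact hend.trans (ReachableAvoiding.of_chain (f := r n)
    (fun j hj => L.graph_adj_ray hr (hi.trans hj)) hS _ hib).symm

theorem exists_finite_forall_reachableFromTail (hW : Function.Injective W)
    (hr : ∀ n, IsRay G (r n)) (hX : Monotone X) {S : Finset V} {M : ℕ} (hSM : S ⊆ X M) :
    ∃ B : Set V, B.Finite ∧
      ∀ v w, v ∉ B → v ∉ S → L.graph.Adj v w → ReachableFromTail L.graph W S v := by
  obtain ⟨cW, hcW⟩ := exists_forall_ge_notMem hW S.finite_toSet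
  choose c hc using fun n => exists_forall_ge_notMem (hr n).1 S.finite_toSet
  refine ⟨W '' Set.Iio cW ∪ (⋃ n < M, r n '' Set.Iio (c n)) ∪
    ⋃ n < M, ⋃ m < M, {x | x ∈ (L.walk n m).support}, ?_, ?_⟩
  · refine (((Set.finite_Iio _).image _).union ((Set.finite_Iio M).biUnion
      fun n _ => (Set.finite_Iio _).image _)).union ((Set.finite_Iio M).biUnion
      fun n _ => (Set.finite_Iio M).biUnion fun m _ => (L.walk n m).support.finite_toSet)
  intro v w hvB hvS hvw
  rcases (L.graph_adj.1 hvw).2 with (hspine | htail) | hwalk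
  · obtain ⟨j, rfl⟩ := exists_eq_of_mem_rayEdges hspine
    refine .of_tail fun i hi => hcW i (le_trans ?_ hi)
    by_contra! hj
    exact hvB (Or.inl (Or.inl ⟨j, hj, rfl⟩))
  · obtain ⟨n, hn⟩ := Set.mem_iUnion.1 htail
    obtain ⟨j, rfl⟩ := exists_eq_of_mem_rayEdges hn
    refine L.reachableFromTail_of_ray hr hX hSM (Nat.le_add_right _ _) fun i hi => ?_
    rcases lt_or_ge n M with hnM | hMn
    · refine hc n i (le_trans ?_ hi)
      by_contra! hj
      exact hvB (Or.inl (Or.inr (Set.mem_biUnion hnM ⟨_, hj, rfl⟩)))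
    · exact fun hiS => L.ray_notMem n n i (le_trans (Nat.le_add_right _ _) hi)
        (hX (hMn.trans (le_max_left n n)) (hSM hiS))
  · obtain ⟨n, m, hnm⟩ := Set.mem_iUnion₂.1 hwalk
    have hv := (L.walk n m).fst_mem_support_of_mem_edges hnm
    rcases lt_or_ge (max n m) M with hnmM | hM
    · rw [max_lt_iff] at hnmM
      exact absurd (Or.inr (Set.mem_iUnion₂.2 ⟨n, hnmM.1, Set.mem_iUnion₂.2 ⟨m, hnmM.2, hv⟩⟩))
        hvB
    · exact L.reachableFromTail_of_mem_walk (hSM.trans (hX hM)) hv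

theorem rayEquiv_graph (hW : Function.Injective W) (hr : ∀ n, IsRay G (r n)) (hX : Monotone X)
    (hcover : ∀ v, ∃ n, v ∈ X n) {g : ℕ → V} (hg : IsRay L.graph g) : RayEquiv L.graph W g :=
  hg.rayEquiv_of_reachableFromTail fun S =>
    let ⟨_, hSM⟩ := hX.exists_subset_of_cover hcover S
    L.exists_finite_forall_reachableFromTail hW hr hX hSM

theorem neighborSet_graph_finite (hW : Function.Injective W)
    (hr : ∀ n, Function.Injective (r n)) (hX : Monotone X) (hcover : ∀ v, ∃ n, v ∈ X n) (v : V) :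
    (L.graph.neighborSet v).Finite := by
  obtain ⟨N, hN⟩ := hcover v
  have hlt : ∀ n m, v ∉ X (max n m) → max n m < N := fun n m hv => by
    by_contra! h
    exact hv (hX h hN)
  refine (((finite_setOf_mem_rayEdges hW v).union ((Set.finite_Iio N).biUnion
    fun n _ => finite_setOf_mem_rayEdges (hr n) v)).union ((Set.finite_Iio N).biUnion
    fun n _ => (Set.finite_Iio N).biUnion fun m _ => (L.walk n m).support.finite_toSet)).subset ?_
  intro w hw
  rcases (L.graph_adj.1 hw).2 with (hspine | htail) | hwalk
  · exact Or.inl (Or.inl hspine)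
  · obtain ⟨n, hn⟩ := Set.mem_iUnion.1 htail
    obtain ⟨j, rfl⟩ := exists_eq_of_mem_rayEdges hn
    have hnN : n < N := by
      simpa using hlt n n (L.ray_notMem n n _ (Nat.le_add_right _ _))
    exact Or.inl (Or.inr (Set.mem_biUnion hnN (rayEdges_shift_subset _ _ hn)))
  · obtain ⟨n, m, hnm⟩ := Set.mem_iUnion₂.1 hwalk
    have hnmN := max_lt_iff.1 (hlt n m (L.walk_notMem n m v
      ((L.walk n m).fst_mem_support_of_mem_edges hnm)))
    exact Or.inr (Set.mem_biUnion hnmN.1 (Set.mem_biUnion hnmN.2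
      ((L.walk n m).snd_mem_support_of_mem_edges hnm)))

end Linkage

/-- A countable graph with a thin end `ω` and a countably infinite set `R` of rays
converging to `ω` has a locally finite subgraph `H` with exactly one end, which is
thin, containing a tail of every ray of `R`. -/
theorem stmt_12 (G : SimpleGraph V) [Countable V]
    (W : ℕ → V) (k : ℕ) (hW : IsRay G W) (hdeg : EndVertexDegree G W k)
    (R : Set (ℕ → V)) (hRc : R.Countable) (hRinf : R.Infinite)
    (hmem : ∀ f ∈ R, IsRay G f ∧ RayEquiv G W f) :
    ∃ H : G.Subgraph,
      (∀ v : V, (H.neighborSet v).Finite) ∧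
      (∃ (f : ℕ → H.verts) (m : ℕ), IsRay H.coe f ∧ EndVertexDegree H.coe f m ∧
        ∀ g : ℕ → H.verts, IsRay H.coe g → RayEquiv H.coe f g) ∧
      (∀ f ∈ R, ∃ a : ℕ, (∀ i, a ≤ i → f i ∈ H.verts) ∧
        ∀ i, a ≤ i → H.Adj (f i) (f (i + 1))) := by
  obtain ⟨X, hX, hcover⟩ := exists_monotone_finset_cover (V := V)
  obtain ⟨r, rfl⟩ := hRc.exists_eq_range hRinf.nonempty
  have hr : ∀ n, IsRay G (r n) := fun n => (hmem _ ⟨n, rfl⟩).1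
  obtain ⟨L⟩ := Linkage.nonempty (fun n => (hmem _ ⟨n, rfl⟩).2) X
  let H := toSubgraph L.graph L.graph_le
  let e : L.graph ≃g H.coe := H.spanningCoeEquivCoeOfSpanning (toSubgraph.isSpanning _ _)
  obtain ⟨m, hm⟩ : ∃ m, EndVertexDegree H.coe (e ∘ W) m :=
    exists_endVertexDegree_of_not_hasDisjointEquivRays
      fun h => hdeg.2 (h.map H.hom Subgraph.hom_injective)
  refine ⟨H, L.neighborSet_graph_finite hW.1 (fun n => (hr n).1) hX hcover,
    ⟨e ∘ W, m, (L.isRay_graph hW).map e.toHom e.injective, hm, fun g hg => ?_⟩, ?_⟩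
  · exact (L.rayEquiv_graph hW.1 hr hX hcover (hg.map e.symm.toHom e.symm.injective)).map
      e.toHom e.injective
  · rintro _ ⟨n, rfl⟩
    exact ⟨L.b n n, fun _ _ => trivial, fun i hi => L.graph_adj_ray hr hi⟩
end

section
/- Let G be a graph with finitely many ends, each of finite vertex-degree, such that G has arbitrarily many pairwise edge-disjoint double rays. Then there exist ends ω, ω' of G (not necessarily distinct) such that G has arbitrarily many pairwise edge-disjoint double rays each of which converges exactly to ω and ω'. -/
open SimpleGraph

variable {V : Type*}

/-- The double ray `D` converges exactly to the ends represented by `W₁` and `W₂`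
(not necessarily distinct): its two constituent rays lie in those ends. -/
def ConvBoth (G : SimpleGraph V) (W₁ W₂ : ℕ → V) (D : ℤ → V) : Prop :=
  (RayEquiv G W₁ (drFwd D) ∧ RayEquiv G W₂ (drBwd D)) ∨
  (RayEquiv G W₁ (drBwd D) ∧ RayEquiv G W₂ (drFwd D))

/-! A double ray splits into a forward and a backward ray, each lying in one of the `N` ends,
so by pigeonhole any `N²k + 1` edge-disjoint double rays contain `k` converging to a common
pair of ends. Since `k` such double rays contain fewer, a pair that works for infinitely
many `k` (one exists, as there are finitely many pairs) works for every `k`. -/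

theorem Finite.exists_forall_of_antitone {ι : Type*} [Finite ι] {P : ι → ℕ → Prop}
    (hP : ∀ i, Antitone (P i)) (h : ∀ k, ∃ i, P i k) : ∃ i, ∀ k, P i k := by
  have := Fintype.ofFinite ι
  by_contra! hfail
  choose bound hbound using hfail
  obtain ⟨i, hi⟩ := h (Finset.univ.sup bound)
  exact hbound i (hP i (Finset.le_sup (Finset.mem_univ i)) hi)

section DoubleRays

variable {G : SimpleGraph V}

lemma IsDoubleRay.isRay_drFwd {f : ℤ → V} (hf : IsDoubleRay G f) : IsRay G (drFwd f) :=
  ⟨fun a b hab => by exact_mod_cast hf.1 hab, fun n => by exact_mod_cast hf.2 n⟩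

lemma IsDoubleRay.isRay_drBwd {f : ℤ → V} (hf : IsDoubleRay G f) : IsRay G (drBwd f) := by
  refine ⟨fun a b hab => by have := hf.1 hab; omega, fun n => ?_⟩
  convert (hf.2 (-(n : ℤ) - 2)).symm using 2 <;> simp only [drBwd] <;> congr 1 <;> push_cast <;>
    ring

variable (G) in
def HasEdgeDisjointDoubleRays (P : (ℤ → V) → Prop) (k : ℕ) : Prop :=
  ∃ F : Fin k → ℤ → V, (∀ i, IsDoubleRay G (F i) ∧ P (F i)) ∧
    Pairwise fun i j => Disjoint (drEdges (F i)) (drEdges (F j))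

namespace HasEdgeDisjointDoubleRays

variable {P Q : (ℤ → V) → Prop} {k m : ℕ}

lemma mono (hk : HasEdgeDisjointDoubleRays G P k) (hmk : m ≤ k)
    (hPQ : ∀ D, IsDoubleRay G D → P D → Q D) : HasEdgeDisjointDoubleRays G Q m := by
  obtain ⟨F, hF, hdisj⟩ := hk
  refine ⟨F ∘ Fin.castLE hmk, fun i => ⟨(hF _).1, hPQ _ (hF _).1 (hF _).2⟩,
    fun i j hij => hdisj ?_⟩
  exact (Fin.castLE_injective hmk).ne hij

lemma antitone (P : (ℤ → V) → Prop) : Antitone (HasEdgeDisjointDoubleRays G P) :=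
  fun _ _ hmk hk => hk.mono hmk fun _ _ => id

lemma exists_of_card_mul_lt {ι : Type*} [Fintype ι] {Q : ι → (ℤ → V) → Prop}
    (hk : HasEdgeDisjointDoubleRays G (fun D => ∃ i, Q i D) (Fintype.card ι * k + 1)) :
    ∃ i, HasEdgeDisjointDoubleRays G (Q i) k := by
  classical
  obtain ⟨F, hF, hdisj⟩ := hk
  choose colour hcolour using fun j => (hF j).2
  obtain ⟨i, hi⟩ := Fintype.exists_lt_card_fiber_of_mul_lt_card colour
    (n := k) (by simp)
  set fibre := Finset.univ.filter fun j => colour j = i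
  obtain ⟨e⟩ : Nonempty (Fin k ↪ fibre) :=
    Function.Embedding.nonempty_of_card_le (by simpa using hi.le)
  refine ⟨i, F ∘ Subtype.val ∘ e, fun j => ⟨(hF _).1, ?_⟩,
    fun a b hab => hdisj (Subtype.val_injective.ne (e.injective.ne hab))⟩
  have hj := (Finset.mem_filter.mp (e j).2).2
  exact hj ▸ hcolour (e j).val

end HasEdgeDisjointDoubleRays

end DoubleRays

theorem stmt_16_general (G : SimpleGraph V)
    (N : ℕ) (E : Fin N → ℕ → V) (hE : ∀ i, IsRay G (E i))
    (hall : ∀ f : ℕ → V, IsRay G f → ∃ i, RayEquiv G (E i) f)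
    (h : ∀ k : ℕ, ∃ F : Fin k → ℤ → V, (∀ i, IsDoubleRay G (F i)) ∧
      Pairwise fun i j => Disjoint (drEdges (F i)) (drEdges (F j))) :
    ∃ W W' : ℕ → V, IsRay G W ∧ IsRay G W' ∧
      ∀ k : ℕ, ∃ F : Fin k → ℤ → V,
        (∀ i, IsDoubleRay G (F i) ∧ ConvBoth G W W' (F i)) ∧
        Pairwise fun i j => Disjoint (drEdges (F i)) (drEdges (F j)) := by
  let ConvTo (p : Fin N × Fin N) (D : ℤ → V) : Prop :=
    RayEquiv G (E p.1) (drFwd D) ∧ RayEquiv G (E p.2) (drBwd D)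
  have hsome : ∀ k, ∃ p, HasEdgeDisjointDoubleRays G (ConvTo p) k := by
    intro k
    obtain ⟨F, hF, hdisj⟩ := h (Fintype.card (Fin N × Fin N) * k + 1)
    have hmany : HasEdgeDisjointDoubleRays G (fun _ => True)
        (Fintype.card (Fin N × Fin N) * k + 1) := ⟨F, fun i => ⟨hF i, trivial⟩, hdisj⟩
    refine HasEdgeDisjointDoubleRays.exists_of_card_mul_lt (hmany.mono le_rfl ?_)
    intro D hD _
    obtain ⟨a, ha⟩ := hall _ hD.isRay_drFwd
    obtain ⟨b, hb⟩ := hall _ hD.isRay_drBwd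
    exact ⟨(a, b), ha, hb⟩
  obtain ⟨p, hp⟩ := Finite.exists_forall_of_antitone
    (fun p => HasEdgeDisjointDoubleRays.antitone (ConvTo p)) hsome
  exact ⟨E p.1, E p.2, hE p.1, hE p.2, fun k => (hp k).mono le_rfl fun _ _ => Or.inl⟩

/-- In a graph with finitely many ends, all thin, with arbitrarily many pairwise
edge-disjoint double rays, some pair of ends (not necessarily distinct) is joined
by arbitrarily many pairwise edge-disjoint double rays converging exactly to them. -/
theorem stmt_16 (G : SimpleGraph V)
    (N : ℕ) (E : Fin N → ℕ → V) (hE : ∀ i, IsRay G (E i))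
    (hall : ∀ f : ℕ → V, IsRay G f → ∃ i, RayEquiv G (E i) f)
    (hthin : ∀ f : ℕ → V, IsRay G f → ∃ k, EndVertexDegree G f k)
    (h : ∀ k : ℕ, ∃ F : Fin k → ℤ → V, (∀ i, IsDoubleRay G (F i)) ∧
      Pairwise fun i j => Disjoint (drEdges (F i)) (drEdges (F j))) :
    ∃ W W' : ℕ → V, IsRay G W ∧ IsRay G W' ∧
      ∀ k : ℕ, ∃ F : Fin k → ℤ → V,
        (∀ i, IsDoubleRay G (F i) ∧ ConvBoth G W W' (F i)) ∧
        Pairwise fun i j => Disjoint (drEdges (F i)) (drEdges (F j)) :=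
  stmt_16_general G N E hE hall h
end
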